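/- Let w be a word over {a<b} that is M-ambiguous with |w|_a ≥ 1. Then w is M-equivalent either to a word starting with a, or to a word of the form b^α a b^β a^γ with α ≥ 1 and β, γ ≥ 0. -/

import Mathlib

open List

/-- Number of occurrences of `v` as a scattered subsequence of `w`. -/
def scount {α : Type*} [DecidableEq α] (w v : List α) : ℕ := w.sublists.count v

/-- The binary ordered alphabet {a < b}. -/
inductive AB | a | b
deriving DecidableEq

open AB

/-- M-equivalence over the ordered alphabet {a < b}. -/
def MEq2 (w w' : List AB) : Prop :=
  scount w [a] = scount w' [a] ∧ scount w [b] = scount w' [b] ∧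
  scount w [a, b] = scount w' [a, b]

/-!
M-equivalence only sees the triple `(m, n, j) = (|w|_a, |w|_b, |w|_ab)`, which satisfies
`j ≤ m n`, and every such triple is realised by a word. For `m ≥ 1`: if `j ≥ n`, a word `u`
realising `(m - 1, n, j - n)` gives `a u`; if `j < n`, the word `b^(n-j) a b^j a^(m-1)` works.
-/

section Scount

variable {α : Type*} [DecidableEq α]

theorem scount_eq_count_sublists' (w v : List α) : scount w v = w.sublists'.count v :=
  (sublists_perm_sublists' w).count_eq v

theorem count_map_cons (z x : α) (v : List α) (s : List (List α)) :
    (s.map (cons z)).count (x :: v) = if z = x then s.count v else 0 := by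
  split_ifs with h
  · subst h
    exact count_map_of_injective s (cons z) cons_injective v
  · simp [count_eq_zero, h]

@[simp]
theorem scount_nil_right (w : List α) : scount w [] = 1 := by
  rw [scount_eq_count_sublists']
  induction w with
  | nil => simp
  | cons z w ih => simp [sublists'_cons, count_append, ih, count_eq_zero]

@[simp]
theorem scount_cons_cons (z x : α) (w v : List α) :
    scount (z :: w) (x :: v) = scount w (x :: v) + if z = x then scount w v else 0 := by
  simp only [scount_eq_count_sublists', sublists'_cons, count_append, count_map_cons]

@[simp]
theorem scount_nil_cons (x : α) (v : List α) : scount [] (x :: v) = 0 := by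
  simp [scount]

@[simp]
theorem scount_singleton (w : List α) (x : α) : scount w [x] = w.count x := by
  induction w with
  | nil => simp
  | cons z w ih => by_cases h : z = x <;> simp [ih, h]

theorem scount_pair_cons (z x y : α) (w : List α) :
    scount (z :: w) [x, y] = scount w [x, y] + if z = x then w.count y else 0 := by
  simp

theorem scount_pair_append (u v : List α) (x y : α) :
    scount (u ++ v) [x, y] = scount u [x, y] + scount v [x, y] + u.count x * v.count y := by
  induction u with
  | nil => simp
  | cons z u ih =>
    by_cases h : z = x
    · simp [ih, h, count_append]; ring
    · simp [ih, h]

theorem scount_pair_replicate {x y : α} (hxy : x ≠ y) (n : ℕ) (z : α) :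
    scount (replicate n z) [x, y] = 0 := by
  induction n with
  | zero => simp
  | succ n ih =>
    rw [replicate_succ, scount_pair_cons, ih, count_replicate]
    split_ifs with h₁ h₂ <;> simp_all

theorem scount_pair_le_mul (w : List α) (x y : α) :
    scount w [x, y] ≤ w.count x * w.count y := by
  induction w with
  | nil => simp
  | cons z w ih =>
    have hy : w.count y ≤ (z :: w).count y := (sublist_cons_self z w).count_le y
    by_cases h : z = x
    · subst h
      rw [scount_pair_cons, if_pos rfl, count_cons_self]
      nlinarith [Nat.mul_le_mul_left (w.count z + 1) hy]
    · rw [scount_pair_cons, if_neg h, add_zero, count_cons_of_ne h]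
      exact ih.trans (Nat.mul_le_mul_left _ hy)

end Scount

/-- The entries above the diagonal of the Parikh matrix of `w`. -/
def parikh (w : List AB) : ℕ × ℕ × ℕ := (w.count a, w.count b, scount w [a, b])

theorem mEq2_iff_parikh_eq {w w' : List AB} : MEq2 w w' ↔ parikh w = parikh w' := by
  simp only [MEq2, parikh, scount_singleton, Prod.mk.injEq]

theorem parikh_cons_a {u : List AB} {m n j : ℕ} (hu : parikh u = (m, n, j)) :
    parikh (a :: u) = (m + 1, n, j + n) := by
  simp only [parikh, Prod.mk.injEq] at hu ⊢
  simp [hu]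

theorem parikh_replicate_b_a_replicate_b_replicate_a (p q r : ℕ) :
    parikh (replicate p b ++ [a] ++ replicate q b ++ replicate r a) = (r + 1, p + q, q) := by
  simp [parikh, scount_pair_append, scount_pair_replicate, count_replicate]

theorem exists_parikh_eq {m n j : ℕ} (h : j ≤ m * n) : ∃ u, parikh u = (m, n, j) := by
  induction m generalizing j with
  | zero =>
    obtain rfl : j = 0 := by simpa using h
    exact ⟨replicate n b, by simp [parikh, count_replicate, scount_pair_replicate]⟩
  | succ m ih =>
    rcases le_or_gt n j with hnj | hjn
    · obtain ⟨u, hu⟩ := ih (j := j - n) (by rw [add_one_mul] at h; omega)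
      exact ⟨a :: u, by rw [parikh_cons_a hu, Nat.sub_add_cancel hnj]⟩
    · exact ⟨_, by rw [parikh_replicate_b_a_replicate_b_replicate_a (n - j) j m,
        Nat.sub_add_cancel hjn.le]⟩

theorem stmt_6_general (w : List AB)
    (ha : 1 ≤ scount w [a]) :
    (∃ u : List AB, MEq2 w ([a] ++ u)) ∨
    (∃ α β γ : ℕ, 1 ≤ α ∧
      MEq2 w (replicate α b ++ [a] ++ replicate β b ++ replicate γ a)) := by
  rw [scount_singleton] at ha
  obtain ⟨m, hm⟩ : ∃ m, w.count a = m + 1 := Nat.exists_eq_add_of_le' ha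
  have hj := scount_pair_le_mul w a b
  have hw : parikh w = (m + 1, w.count b, scount w [a, b]) := by rw [parikh, hm]
  simp only [mEq2_iff_parikh_eq, hw]
  rw [hm, add_one_mul] at hj
  generalize w.count b = n, scount w [a, b] = j at hj ⊢
  rcases le_or_gt n j with hnj | hjn
  · obtain ⟨u, hu⟩ := exists_parikh_eq (m := m) (n := n) (j := j - n) (by omega)
    refine .inl ⟨u, ?_⟩
    rw [singleton_append, parikh_cons_a hu, Nat.sub_add_cancel hnj]
  · refine .inr ⟨n - j, j, m, by omega, ?_⟩
    rw [parikh_replicate_b_a_replicate_b_replicate_a, Nat.sub_add_cancel hjn.le]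

theorem stmt_6 (w : List AB)
    (hamb : ∃ w' : List AB, w' ≠ w ∧ MEq2 w w')
    (ha : 1 ≤ scount w [a]) :
    (∃ u : List AB, MEq2 w ([a] ++ u)) ∨
    (∃ α β γ : ℕ, 1 ≤ α ∧
      MEq2 w (replicate α b ++ [a] ++ replicate β b ++ replicate γ a)) :=
  stmt_6_general w ha
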